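/- Let G be a connected bipartite graph with bipartition (A,B) and 1 ≤ |A| ≤ |B|. Then γ(G) = |A| if and only if γ(G) = β(G) = |A|. -/

import Mathlib

/-! Since every edge meets `A`, the side `A` is a vertex cover, so `β(G) ≤ |A|`. Conversely, in a
graph without isolated vertices every vertex cover dominates (a vertex outside the cover has a
neighbour, which must lie in the cover), so `γ(G) ≤ β(G)`. Hence `γ(G) = |A|` forces
`β(G) = |A|`; connectedness rules out isolated vertices because both sides are nonempty. -/

open Finset

variable {V : Type} [Fintype V] [DecidableEq V]

def IsDomSet (G : SimpleGraph V) (D : Finset V) : Prop :=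
  ∀ v : V, v ∉ D → ∃ u ∈ D, G.Adj u v

noncomputable def domNum (G : SimpleGraph V) : ℕ :=
  sInf {n | ∃ D : Finset V, IsDomSet G D ∧ D.card = n}

def IsVertexCover (G : SimpleGraph V) (C : Finset V) : Prop :=
  ∀ ⦃u v : V⦄, G.Adj u v → u ∈ C ∨ v ∈ C

noncomputable def coverNum (G : SimpleGraph V) : ℕ :=
  sInf {n | ∃ C : Finset V, IsVertexCover G C ∧ C.card = n}

def IsIndepFinset (G : SimpleGraph V) (I : Finset V) : Prop :=
  ∀ u ∈ I, ∀ v ∈ I, ¬ G.Adj u v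

noncomputable def indepNum (G : SimpleGraph V) : ℕ :=
  sSup {n | ∃ I : Finset V, IsIndepFinset G I ∧ I.card = n}

def IsLeaf (G : SimpleGraph V) [DecidableRel G.Adj] (v : V) : Prop :=
  G.degree v = 1

def IsSupport (G : SimpleGraph V) [DecidableRel G.Adj] (v : V) : Prop :=
  ∃ u, G.Adj v u ∧ IsLeaf G u

def IsWeakSupport (G : SimpleGraph V) [DecidableRel G.Adj] (v : V) : Prop :=
  ((G.neighborFinset v).filter fun l => G.degree l = 1).card = 1

def IsBipartition (G : SimpleGraph V) (A B : Finset V) : Prop :=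
  A ∪ B = Finset.univ ∧ Disjoint A B ∧
    ∀ ⦃u v : V⦄, G.Adj u v → (u ∈ A ∧ v ∈ B) ∨ (u ∈ B ∧ v ∈ A)

section Cover

variable {α : Type} {G : SimpleGraph α}

theorem domNum_le_card {D : Finset α} (hD : IsDomSet G D) : domNum G ≤ D.card :=
  Nat.sInf_le ⟨D, hD, rfl⟩

theorem coverNum_le_card {C : Finset α} (hC : IsVertexCover G C) : coverNum G ≤ C.card :=
  Nat.sInf_le ⟨C, hC, rfl⟩

theorem isVertexCover_univ [Fintype α] : IsVertexCover G univ :=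
  fun u _ _ => Or.inl (mem_univ u)

theorem exists_isVertexCover_card_eq_coverNum [Fintype α] :
    ∃ C : Finset α, IsVertexCover G C ∧ C.card = coverNum G :=
  Nat.sInf_mem (s := {n | ∃ C : Finset α, IsVertexCover G C ∧ C.card = n})
    ⟨_, univ, isVertexCover_univ, rfl⟩

theorem IsVertexCover.isDomSet {C : Finset α} (hC : IsVertexCover G C)
    (hG : ∀ v, ¬ G.IsIsolated v) : IsDomSet G C := by
  intro v hv
  obtain ⟨u, hvu⟩ := G.exists_adj_iff_not_isIsolated.mpr (hG v)
  exact ⟨u, (hC hvu).resolve_left hv, hvu.symm⟩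

theorem domNum_le_coverNum [Fintype α] (hG : ∀ v, ¬ G.IsIsolated v) : domNum G ≤ coverNum G := by
  obtain ⟨C, hC, hCcard⟩ := exists_isVertexCover_card_eq_coverNum (G := G)
  exact hCcard ▸ domNum_le_card (hC.isDomSet hG)

end Cover

namespace IsBipartition

variable {α : Type} [Fintype α] [DecidableEq α] {G : SimpleGraph α} {A B : Finset α}

theorem isVertexCover_left (h : IsBipartition G A B) : IsVertexCover G A := by
  intro u v huv
  rcases h.2.2 huv with ⟨hu, -⟩ | ⟨-, hv⟩
  · exact Or.inl hu
  · exact Or.inr hv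

theorem nontrivial (h : IsBipartition G A B) (hA : A.Nonempty) (hB : B.Nonempty) :
    Nontrivial α := by
  obtain ⟨a, ha⟩ := hA
  obtain ⟨b, hb⟩ := hB
  exact nontrivial_of_ne a b fun hab => disjoint_left.mp h.2.1 ha (hab ▸ hb)

end IsBipartition

theorem domNum_eq_smaller_side_iff_domNum_eq_coverNum (G : SimpleGraph V)
    (A B : Finset V) (hconn : G.Connected) (hbip : IsBipartition G A B)
    (hA : 1 ≤ A.card) (hAB : A.card ≤ B.card) :
    domNum G = A.card ↔ (domNum G = A.card ∧ coverNum G = A.card) := by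
  refine ⟨fun hdom => ⟨hdom, ?_⟩, And.left⟩
  have hAne : A.Nonempty := card_pos.mp hA
  have hBne : B.Nonempty := card_pos.mp (hA.trans hAB)
  have : Nontrivial V := hbip.nontrivial hAne hBne
  have hcov : coverNum G ≤ A.card := coverNum_le_card hbip.isVertexCover_left
  have hdom_le : domNum G ≤ coverNum G :=
    domNum_le_coverNum hconn.preconnected.not_isIsolated
  omega
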